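/- arXiv:1112.5239 — 3 statements merged into one kernel-verified Lean document; each statement's English description precedes it below -/
import Mathlib

section
/- For every function f : 𝔹^N → 𝔹^N, the map G_f is continuous on the metric space (𝒳, d). -/
open scoped BigOperators

/-- Hamming distance `d_e` on `𝔹^N`: the number of coordinates where `E` and `F` differ. -/
noncomputable def deH (N : ℕ) (E F : Fin N → Bool) : ℝ :=
  ((Finset.univ.filter fun i => E i ≠ F i).card : ℝ)

/-- The distance `d_s` on general strategies `𝒫(⟦1,N⟧)^ℕ`:
`d_s(S,Š) = (9/N) Σ_{k=1}^{∞} |S^k Δ Š^k| / 10^k` (sequences are indexed from 0 here,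
so the `k`-th term of the sequence gets weight `10^{-(k+1)}`). -/
noncomputable def dsG (N : ℕ) (S T : ℕ → Finset (Fin N)) : ℝ :=
  (9 / (N : ℝ)) * ∑' k : ℕ, ((symmDiff (S k) (T k)).card : ℝ) / 10 ^ (k + 1)

/-- The distance `d` on the phase space `𝒳 = 𝒫(⟦1,N⟧)^ℕ × 𝔹^N`. -/
noncomputable def dX (N : ℕ)
    (X Y : (ℕ → Finset (Fin N)) × (Fin N → Bool)) : ℝ :=
  deH N X.2 Y.2 + dsG N X.1 Y.1

/-- `F_f(P,E)_j = f(E)_j` if `j ∈ P`, and `E_j` otherwise. -/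
def Ff (N : ℕ) (f : (Fin N → Bool) → (Fin N → Bool)) (P : Finset (Fin N))
    (E : Fin N → Bool) : Fin N → Bool :=
  fun j => if j ∈ P then f E j else E j

/-- `G_f(S,E) = (σ(S), F_f(S^0,E))`, where `σ` is the shift. -/
def Gf (N : ℕ) (f : (Fin N → Bool) → (Fin N → Bool)) :
    (ℕ → Finset (Fin N)) × (Fin N → Bool) → (ℕ → Finset (Fin N)) × (Fin N → Bool) :=
  fun X => (fun n => X.1 (n + 1), Ff N f (X.1 0) X.2)


lemma summable_aux (N : ℕ) (S T : ℕ → Finset (Fin N)) :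
    Summable (fun k : ℕ => ((symmDiff (S k) (T k)).card : ℝ) / 10 ^ (k + 1)) := by
  have hb : Summable (fun k : ℕ => (N : ℝ) * (1/10) ^ (k+1)) := by
    have h := summable_geometric_of_lt_one (r := (1/10 : ℝ)) (by norm_num) (by norm_num)
    exact ((h.mul_left (1/10)).mul_left (N : ℝ)).congr (fun k => by ring)
  apply Summable.of_nonneg_of_le (fun k => by positivity) _ hb
  intro k
  have hcard : ((symmDiff (S k) (T k)).card : ℝ) ≤ N := by
    exact_mod_cast (Finset.card_le_univ _).trans_eq (by simp)
  rw [div_eq_mul_inv, ← inv_pow, ← one_div]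
  exact mul_le_mul_of_nonneg_right hcard (by positivity)

lemma dsG_nonneg (N : ℕ) (S T : ℕ → Finset (Fin N)) : 0 ≤ dsG N S T := by
  unfold dsG
  apply mul_nonneg (by positivity)
  exact tsum_nonneg (fun k => by positivity)

lemma deH_nonneg (N : ℕ) (E F : Fin N → Bool) : 0 ≤ deH N E F := by
  unfold deH; positivity

/-- For every function `f : 𝔹^N → 𝔹^N`, the map `G_f` is continuous
on the metric space `(𝒳, d)` (continuity stated in the usual `ε`-`δ` form for the
metric `d`). -/
theorem Gf_continuous (N : ℕ) (hN : 0 < N)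
    (f : (Fin N → Bool) → (Fin N → Bool)) :
    ∀ X : (ℕ → Finset (Fin N)) × (Fin N → Bool), ∀ ε : ℝ, 0 < ε →
      ∃ δ : ℝ, 0 < δ ∧ ∀ Y : (ℕ → Finset (Fin N)) × (Fin N → Bool),
        dX N X Y < δ → dX N (Gf N f X) (Gf N f Y) < ε := by
  intro X ε hε
  refine ⟨min 1 (min (9 / (10 * N)) (ε / 10)), by positivity, ?_⟩
  rintro Y hd
  have hdeH0 := deH_nonneg N X.2 Y.2
  have hdsG0 := dsG_nonneg N X.1 Y.1
  -- X.2 = Y.2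
  have hE : X.2 = Y.2 := by
    have h1 : deH N X.2 Y.2 < 1 := by
      have := hd.trans_le (min_le_left _ _)
      unfold dX at this; linarith
    have hc : (Finset.univ.filter fun i => X.2 i ≠ Y.2 i).card = 0 := by
      by_contra h
      have : (1 : ℝ) ≤ ((Finset.univ.filter fun i => X.2 i ≠ Y.2 i).card : ℝ) := by
        exact_mod_cast Nat.one_le_iff_ne_zero.mpr h
      unfold deH at h1; linarith
    funext i
    by_contra h
    rw [Finset.card_eq_zero, Finset.filter_eq_empty_iff] at hc
    exact hc (Finset.mem_univ i) h
  -- X.1 0 = Y.1 0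
  have hsum := summable_aux N X.1 Y.1
  have hfirst : ((symmDiff (X.1 0) (Y.1 0)).card : ℝ) / 10 ^ (0 + 1) ≤
      ∑' k : ℕ, ((symmDiff (X.1 k) (Y.1 k)).card : ℝ) / 10 ^ (k + 1) :=
    Summable.le_tsum hsum 0 (fun k _ => by positivity)
  have hS0 : X.1 0 = Y.1 0 := by
    have h2 : dsG N X.1 Y.1 < 9 / (10 * N) := by
      have := hd.trans_le ((min_le_right _ _).trans (min_le_left _ _))
      unfold dX at this; linarith
    have hNpos : (0 : ℝ) < N := by exact_mod_cast hN
    have hc : (symmDiff (X.1 0) (Y.1 0)).card = 0 := by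
      by_contra h
      have h1 : (1 : ℝ) ≤ ((symmDiff (X.1 0) (Y.1 0)).card : ℝ) := by
        exact_mod_cast Nat.one_le_iff_ne_zero.mpr h
      have : 9 / (10 * N) ≤ dsG N X.1 Y.1 := by
        unfold dsG
        calc 9 / (10 * (N:ℝ)) = 9 / N * ((1:ℝ) / 10 ^ (0+1)) := by ring
          _ ≤ 9 / N * (((symmDiff (X.1 0) (Y.1 0)).card : ℝ) / 10 ^ (0+1)) := by
              apply mul_le_mul_of_nonneg_left _ (by positivity)
              apply div_le_div_of_nonneg_right h1 (by positivity) |>.trans_eq rfl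
          _ ≤ _ := mul_le_mul_of_nonneg_left hfirst (by positivity)
      linarith
    rw [Finset.card_eq_zero] at hc
    have := symmDiff_eq_bot.mp hc
    exact this
  -- the image distance
  have hεd : dsG N X.1 Y.1 < ε / 10 := by
    have := hd.trans_le ((min_le_right _ _).trans (min_le_right _ _))
    unfold dX at this; linarith
  have himg : dX N (Gf N f X) (Gf N f Y) = dsG N (fun n => X.1 (n+1)) (fun n => Y.1 (n+1)) := by
    unfold dX Gf deH
    have : Ff N f (X.1 0) X.2 = Ff N f (Y.1 0) Y.2 := by rw [hE, hS0]
    rw [this]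
    simp
  rw [himg]
  have htail : dsG N (fun n => X.1 (n+1)) (fun n => Y.1 (n+1)) ≤ 10 * dsG N X.1 Y.1 := by
    unfold dsG
    rw [show (10:ℝ) * (9 / N * ∑' k : ℕ, ((symmDiff (X.1 k) (Y.1 k)).card : ℝ) / 10 ^ (k + 1))
        = 9 / N * (10 * ∑' k : ℕ, ((symmDiff (X.1 k) (Y.1 k)).card : ℝ) / 10 ^ (k + 1)) by ring]
    apply mul_le_mul_of_nonneg_left _ (by positivity)
    have heq : ∀ k : ℕ, ((symmDiff (X.1 (k+1)) (Y.1 (k+1))).card : ℝ) / 10 ^ (k + 1)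
        = 10 * (((symmDiff (X.1 (k+1)) (Y.1 (k+1))).card : ℝ) / 10 ^ ((k+1) + 1)) := by
      intro k; field_simp; ring
    calc ∑' k : ℕ, ((symmDiff (X.1 (k+1)) (Y.1 (k+1))).card : ℝ) / 10 ^ (k + 1)
        = 10 * ∑' k : ℕ, ((symmDiff (X.1 (k+1)) (Y.1 (k+1))).card : ℝ) / 10 ^ ((k+1) + 1) := by
          rw [← tsum_mul_left]; exact tsum_congr heq
      _ ≤ 10 * ∑' k : ℕ, ((symmDiff (X.1 k) (Y.1 k)).card : ℝ) / 10 ^ (k + 1) := by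
          apply mul_le_mul_of_nonneg_left _ (by norm_num)
          have h0 := Summable.tsum_eq_zero_add hsum
          have hpos : (0:ℝ) ≤ ((symmDiff (X.1 0) (Y.1 0)).card : ℝ) / 10 ^ (0 + 1) := by
            positivity
          rw [h0]
          linarith
  linarith
end

section
/- For every function f : 𝔹^N → 𝔹^N, the map G_f has sensitive dependence on initial conditions on (𝒳, d): there exists δ > 0 such that for any X ∈ 𝒳 and any neighborhood V of X, there exist Y ∈ V and n > 0 with d(G_f^n(X), G_f^n(Y)) > δ. -/
open scoped BigOperators

/-! Complementing the strategy at a late index `k` moves a point by only `9/10^(k+1)`, whatever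
`f` is; `k` applications of the shift bring that complemented set to index `0`, where it
contributes `9/10` to the distance. -/

lemma Gf_iterate_fst (N : ℕ) (f : (Fin N → Bool) → (Fin N → Bool)) (n : ℕ)
    (X : (ℕ → Finset (Fin N)) × (Fin N → Bool)) :
    ((Gf N f)^[n] X).1 = fun j => X.1 (j + n) := by
  induction n generalizing X with
  | zero => rfl
  | succ n ih =>
    rw [Function.iterate_succ_apply, ih]
    funext j
    simp only [Gf, Nat.add_assoc]

lemma deH_self (N : ℕ) (E : Fin N → Bool) : deH N E E = 0 := by
  simp [deH]

lemma dsG_le_dX (N : ℕ) (X Y : (ℕ → Finset (Fin N)) × (Fin N → Bool)) :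
    dsG N X.1 Y.1 ≤ dX N X Y :=
  le_add_of_nonneg_left (deH_nonneg N X.2 Y.2)

lemma dsG_update_compl (N : ℕ) (hN : 0 < N) (S : ℕ → Finset (Fin N)) (k : ℕ) :
    dsG N S (Function.update S k (S k)ᶜ) = 9 / 10 ^ (k + 1) := by
  have hcard : ((symmDiff (S k) (S k)ᶜ).card : ℝ) = N := by
    simp [symmDiff_compl_self, Finset.top_eq_univ]
  rw [dsG, tsum_eq_single k fun j hj => by simp [hj]]
  simp only [Function.update_self, hcard]
  field_simp

lemma shift_update {α : Type*} (S : ℕ → α) (k : ℕ) (a : α) :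
    (fun j => Function.update S k a (j + k)) = Function.update (fun j => S (j + k)) 0 a := by
  funext j
  rcases Nat.eq_zero_or_pos j with rfl | hj
  · simp
  · simp [hj.ne']

lemma exists_pos_nine_div_pow_lt {ε : ℝ} (hε : 0 < ε) :
    ∃ k : ℕ, 0 < k ∧ 9 / 10 ^ (k + 1) < ε := by
  obtain ⟨n, hn⟩ := exists_pow_lt_of_lt_one hε (by norm_num : (1 / 10 : ℝ) < 1)
  refine ⟨n + 1, n.succ_pos, lt_of_le_of_lt ?_ hn⟩
  rw [one_div_pow, div_le_div_iff₀ (by positivity) (by positivity)]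
  rw [pow_succ, pow_succ]
  nlinarith [pow_pos (by norm_num : (0 : ℝ) < 10) n]

/-- For every function `f : 𝔹^N → 𝔹^N`, the map `G_f` has sensitive
dependence on initial conditions on `(𝒳, d)`: there exists `δ > 0` such that for any
`X ∈ 𝒳` and any neighborhood `V` of `X` (equivalently, any open ball around `X`),
there exist `Y ∈ V` and `n > 0` with `d(G_f^n(X), G_f^n(Y)) > δ`. -/
theorem Gf_sensitive_dependence (N : ℕ) (hN : 0 < N)
    (f : (Fin N → Bool) → (Fin N → Bool)) :
    ∃ δ : ℝ, 0 < δ ∧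
      ∀ X : (ℕ → Finset (Fin N)) × (Fin N → Bool), ∀ ε : ℝ, 0 < ε →
        ∃ Y : (ℕ → Finset (Fin N)) × (Fin N → Bool), dX N X Y < ε ∧
          ∃ n : ℕ, 0 < n ∧ δ < dX N ((Gf N f)^[n] X) ((Gf N f)^[n] Y) := by
  refine ⟨1 / 2, by norm_num, fun X ε hε => ?_⟩
  obtain ⟨k, hk, hkε⟩ := exists_pos_nine_div_pow_lt hε
  let Y : (ℕ → Finset (Fin N)) × (Fin N → Bool) := (Function.update X.1 k (X.1 k)ᶜ, X.2)
  have hclose : dX N X Y = 9 / 10 ^ (k + 1) := by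
    rw [dX, deH_self, dsG_update_compl N hN, zero_add]
  have hfar : dsG N ((Gf N f)^[k] X).1 ((Gf N f)^[k] Y).1 = 9 / 10 := by
    rw [Gf_iterate_fst, Gf_iterate_fst, shift_update]
    simpa using dsG_update_compl N hN (fun j => X.1 (j + k)) 0
  refine ⟨Y, hclose ▸ hkε, k, hk, ?_⟩
  linarith [dsG_le_dX N ((Gf N f)^[k] X) ((Gf N f)^[k] Y)]
end

section
/- Let p be a prime with p ≡ 3 (mod 4), let x₀ be a quadratic residue modulo p (i.e., x₀ ≡ a² mod p for some a not divisible by p), and let L ≥ 0. If y ≡ x₀^{2^L} (mod p), then y^{((p+1)/4)^L} ≡ x₀ (mod p). In particular, the decryption step of the Blum-Goldwasser cryptosystem, r_p = y^{((p+1)/4)^L} mod p, recovers x₀ modulo p. -/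
lemma qr_pow_key (p : ℕ) (hp : p.Prime) (hp4 : p % 4 = 3)
    (x₀ a : ZMod p) (ha : a ≠ 0) (hx₀ : x₀ = a ^ 2) :
    x₀ ^ ((p + 1) / 2) = x₀ := by
  haveI : Fact p.Prime := ⟨hp⟩
  have h1 : (p + 1) / 2 = (p - 1) / 2 + 1 := by omega
  have h2 : 2 * ((p - 1) / 2) = p - 1 := by omega
  have hfer : a ^ (p - 1) = 1 := ZMod.pow_card_sub_one_eq_one ha
  rw [h1, pow_succ, hx₀, ← pow_mul, h2, hfer, one_mul]

/-- Let `p` be a prime with `p ≡ 3 (mod 4)`, let `x₀` be a quadratic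
residue modulo `p` (i.e. `x₀ = a²` in `ZMod p` for some `a` not divisible by `p`), and
let `L ≥ 0`.  If `y ≡ x₀^(2^L) (mod p)`, then `y^(((p+1)/4)^L) ≡ x₀ (mod p)`.
In particular, the decryption step of the Blum-Goldwasser cryptosystem,
`r_p = y^(((p+1)/4)^L) mod p`, recovers `x₀` modulo `p`. -/
theorem blum_goldwasser_decryption (p : ℕ) (hp : p.Prime) (hp4 : p % 4 = 3)
    (L : ℕ) (x₀ y a : ZMod p) (ha : a ≠ 0) (hx₀ : x₀ = a ^ 2)
    (hy : y = x₀ ^ 2 ^ L) :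
    y ^ ((p + 1) / 4) ^ L = x₀ := by
  have h4 : 2 * ((p + 1) / 4) = (p + 1) / 2 := by omega
  subst hy
  rw [← pow_mul, ← mul_pow, h4]
  induction L with
  | zero => simp
  | succ n ih =>
      rw [pow_succ, pow_mul, ih, qr_pow_key p hp hp4 x₀ a ha hx₀]
end
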